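/- arXiv:1709.02580 — 8 statements merged into one kernel-verified Lean document; each statement's English description precedes it below -/
import Mathlib

section
/- Let p be an odd prime and n a positive integer. If S is a simultaneously negacyclic subspace of F_p^n × F_p^n, then its dual S^⊥ with respect to the symplectic inner product is also a simultaneously negacyclic subspace of F_p^n × F_p^n. -/
/-- The negacyclic shift `N : F_p^n → F_p^n`,
`(u_0, …, u_{n−1}) ↦ (−u_{n−1}, u_0, …, u_{n−2})`. -/
def negashift (p n : ℕ) (hn : 0 < n) (u : Fin n → ZMod p) : Fin n → ZMod p :=
  fun i => if (i : ℕ) = 0 then -u ⟨n - 1, Nat.sub_lt hn Nat.one_pos⟩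
           else u ⟨(i : ℕ) - 1, Nat.lt_of_le_of_lt (Nat.sub_le _ _) i.isLt⟩

/-- The symplectic inner product on `F_p^n × F_p^n`. -/
def sympForm (p n : ℕ) (u v : (Fin n → ZMod p) × (Fin n → ZMod p)) : ZMod p :=
  (∑ j, u.1 j * v.2 j) - (∑ j, u.2 j * v.1 j)

/-- Inverse of the negashift. -/
def nunshift (p n : ℕ) (hn : 0 < n) (u : Fin n → ZMod p) : Fin n → ZMod p :=
  fun i => if h : (i : ℕ) = n - 1 then -u ⟨0, hn⟩
           else u ⟨(i : ℕ) + 1,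
             Nat.lt_sub_iff_add_lt.mp (lt_of_le_of_ne (Nat.le_pred_of_lt i.isLt) h)⟩

lemma nunshift_negashift (p n : ℕ) (hn : 0 < n) (u : Fin n → ZMod p) :
    nunshift p n hn (negashift p n hn u) = u := by
  funext i
  unfold nunshift negashift
  by_cases h : (i : ℕ) = n - 1
  · rw [dif_pos h]
    simp only [eq_self_iff_true, if_true, neg_neg]
    have hi : i = ⟨n - 1, Nat.sub_lt hn Nat.one_pos⟩ := by
      apply Fin.ext; exact h
    rw [hi]
  · rw [dif_neg h]
    have h1 : (i : ℕ) + 1 ≠ 0 := Nat.succ_ne_zero _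
    simp only [if_neg h1, Nat.add_sub_cancel]

lemma negashift_injective (p n : ℕ) (hn : 0 < n) :
    Function.Injective (negashift p n hn) := by
  intro u v h
  have := congrArg (nunshift p n hn) h
  rwa [nunshift_negashift, nunshift_negashift] at this

lemma dot_negashift (p n : ℕ) (hn : 0 < n) (u v : Fin n → ZMod p) :
    ∑ j, negashift p n hn u j * negashift p n hn v j = ∑ j, u j * v j := by
  obtain ⟨m, rfl⟩ : ∃ m, n = m + 1 := ⟨n - 1, (Nat.succ_pred_eq_of_pos hn).symm⟩
  rw [← Equiv.sum_comp (finRotate (m + 1))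
    (fun j => negashift p (m + 1) hn u j * negashift p (m + 1) hn v j)]
  apply Finset.sum_congr rfl
  intro k _
  simp only [finRotate_succ_apply]
  unfold negashift
  by_cases hk : k = Fin.last m
  · have h0 : ((k + 1 : Fin (m + 1)) : ℕ) = 0 := by
      rw [hk]; simp
    have hkv : (⟨m + 1 - 1, Nat.sub_lt hn Nat.one_pos⟩ : Fin (m + 1)) = k := by
      apply Fin.ext
      simp [hk]
    simp only [h0, eq_self_iff_true, if_true, neg_mul_neg]
    rw [hkv]
  · have h1 : ((k + 1 : Fin (m + 1)) : ℕ) = (k : ℕ) + 1 := by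
      rw [Fin.val_add_one]
      simp [hk]
    simp only [h1, Nat.succ_ne_zero, if_false, Nat.add_sub_cancel, Fin.eta]

lemma sympForm_negashift (p n : ℕ) (hn : 0 < n)
    (u v : (Fin n → ZMod p) × (Fin n → ZMod p)) :
    sympForm p n (negashift p n hn u.1, negashift p n hn u.2)
        (negashift p n hn v.1, negashift p n hn v.2) = sympForm p n u v := by
  unfold sympForm
  simp only
  rw [dot_negashift, dot_negashift]

/-- if `S` is a simultaneously negacyclic subspace of `F_p^n × F_p^n`, then the
dual `S^⊥` with respect to the symplectic inner product is also a simultaneously negacyclic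
subspace of `F_p^n × F_p^n`. -/
theorem stmt1 (p n : ℕ) [Fact p.Prime] (hp : Odd p) (hn : 0 < n)
    (S : Submodule (ZMod p) ((Fin n → ZMod p) × (Fin n → ZMod p)))
    (hneg : ∀ ab ∈ S, (negashift p n hn ab.1, negashift p n hn ab.2) ∈ S) :
    ∃ W : Submodule (ZMod p) ((Fin n → ZMod p) × (Fin n → ZMod p)),
      (W : Set ((Fin n → ZMod p) × (Fin n → ZMod p)))
          = {u | ∀ v ∈ S, sympForm p n u v = 0} ∧
      ∀ ab ∈ W, (negashift p n hn ab.1, negashift p n hn ab.2) ∈ W := by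
  -- the shift map on S is surjective
  have hsurj : ∀ v ∈ S, ∃ w ∈ S,
      (negashift p n hn w.1, negashift p n hn w.2) = v := by
    intro v hv
    let f : S → S := fun x => ⟨(negashift p n hn x.1.1, negashift p n hn x.1.2),
      hneg x.1 x.2⟩
    have hinj : Function.Injective f := by
      intro x y hxy
      have h := congrArg Subtype.val hxy
      simp only [f, Prod.mk.injEq] at h
      ext1
      exact Prod.ext (negashift_injective p n hn h.1) (negashift_injective p n hn h.2)
    have hfs : Function.Surjective f := Finite.surjective_of_injective hinj
    obtain ⟨w, hw⟩ := hfs ⟨v, hv⟩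
    exact ⟨w.1, w.2, congrArg Subtype.val hw⟩
  refine ⟨{ carrier := {u | ∀ v ∈ S, sympForm p n u v = 0},
            add_mem' := ?_, zero_mem' := ?_, smul_mem' := ?_ }, rfl, ?_⟩
  · intro a b ha hb v hv
    have h1 := ha v hv
    have h2 := hb v hv
    simp only [sympForm, Prod.fst_add, Prod.snd_add, Pi.add_apply, add_mul,
      Finset.sum_add_distrib] at *
    linear_combination h1 + h2
  · intro v hv
    simp [sympForm]
  · intro c a ha v hv
    have h1 := ha v hv
    simp only [sympForm, Prod.smul_fst, Prod.smul_snd, Pi.smul_apply, smul_eq_mul,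
      mul_assoc, ← Finset.mul_sum] at *
    rw [← mul_sub, h1, mul_zero]
  · intro ab hab v hv
    obtain ⟨w, hwS, hwv⟩ := hsurj v hv
    rw [← hwv, sympForm_negashift]
    exact hab w hwS
end

section
/- Let p be an odd prime and n a positive integer, and let S be a simultaneously negacyclic subspace of F_p^n × F_p^n. Then S is totally isotropic if and only if for any two elements (a,b) and (c,d) of S, the corresponding elements of R = F_p[X]/(X^n+1) satisfy a(x)·d(x⁻¹) − b(x)·c(x⁻¹) = 0 in R. -/
open Polynomial

/-- The cyclotomic ring `R = F_p[X]/(X^n + 1)`. -/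
abbrev Rpn (p n : ℕ) := Polynomial (ZMod p) ⧸ Ideal.span {(X : Polynomial (ZMod p)) ^ n + 1}

/-- The quotient map `F_p[X] → R`. -/
noncomputable def mkR (p n : ℕ) : Polynomial (ZMod p) →+* Rpn p n :=
  Ideal.Quotient.mk (Ideal.span {(X : Polynomial (ZMod p)) ^ n + 1})

/-- The polynomial `a_0 + a_1 X + ⋯ + a_{n−1} X^{n−1}` attached to a vector. -/
noncomputable def toPoly (p n : ℕ) (a : Fin n → ZMod p) : Polynomial (ZMod p) :=
  ∑ j : Fin n, C (a j) * X ^ (j : ℕ)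

/-- The identification `F_p^n → R`, `a ↦ a(x)`. -/
noncomputable def toR (p n : ℕ) (a : Fin n → ZMod p) : Rpn p n := mkR p n (toPoly p n a)

/-- `x⁻¹ = −x^{n−1}` in `R`, where `x` is the image of `X`. -/
noncomputable def xinv (p n : ℕ) : Rpn p n := -(mkR p n X) ^ (n - 1)

/-! Write `τ : R → F_p` (`Rpn.constCoeff`) for the constant coefficient with respect to the
basis `1, x, …, x^{n-1}`. Since `τ(x^i x^{-j}) = δ_{ij}` for `i, j < n`, one has
`τ(a(x) d(x⁻¹)) = ∑ a_j d_j`, so `⟨u, v⟩_s = τ(F(u, v))` with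
`F(u, v) = a(x) d(x⁻¹) − b(x) c(x⁻¹)` (`Rpn.symplecticPoly`). The negashift acts on `v` by
multiplication with `x⁻¹`, hence `⟨u, N^k v⟩_s = τ(x^{-k} F(u, v))` is the `k`-th coordinate of
`F(u, v)`. So if `S` is negacyclic and totally isotropic, every coordinate of `F(u, v)` vanishes. -/

namespace Rpn

variable {p n : ℕ}

lemma X_pow_add_one_monic (hn : 0 < n) : ((X : (ZMod p)[X]) ^ n + 1).Monic := by
  simpa only [map_one] using monic_X_pow_add_C (1 : ZMod p) hn.ne'

lemma mkR_X_pow : mkR p n X ^ n = -1 := by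
  have h : mkR p n (X ^ n + 1) = 0 :=
    Ideal.Quotient.eq_zero_iff_mem.mpr (Ideal.subset_span rfl)
  rw [map_add, map_pow, map_one] at h
  exact eq_neg_of_add_eq_zero_left h

lemma xinv_mul_mkR_X (hn : 0 < n) : xinv p n * mkR p n X = 1 := by
  calc xinv p n * mkR p n X = -mkR p n X ^ (n - 1 + 1) := by rw [xinv, pow_succ]; ring
    _ = 1 := by rw [Nat.sub_add_cancel hn, mkR_X_pow, neg_neg]

lemma xinv_pow_of_le (hn : 0 < n) {m : ℕ} (hm : m ≤ n) : xinv p n ^ m = -mkR p n X ^ (n - m) := by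
  obtain ⟨k, rfl⟩ := Nat.exists_eq_add_of_le hm
  calc xinv p (m + k) ^ m = -(xinv p (m + k) ^ m * mkR p (m + k) X ^ (m + k)) := by
        rw [mkR_X_pow]; ring
    _ = -((xinv p (m + k) * mkR p (m + k) X) ^ m * mkR p (m + k) X ^ k) := by ring
    _ = -mkR p (m + k) X ^ (m + k - m) := by
        rw [xinv_mul_mkR_X hn, one_pow, one_mul, Nat.add_sub_cancel_left]

lemma aeval_xinv_toPoly (d : Fin n → ZMod p) :
    aeval (xinv p n) (toPoly p n d) = ∑ j : Fin n, d j • xinv p n ^ (j : ℕ) := by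
  simp only [toPoly, map_sum, map_mul, aeval_C, map_pow, aeval_X]
  exact Finset.sum_congr rfl fun j _ => (Algebra.smul_def _ _).symm

lemma aeval_xinv_toPoly_negashift (hn : 0 < n) (d : Fin n → ZMod p) :
    aeval (xinv p n) (toPoly p n (negashift p n hn d))
      = xinv p n * aeval (xinv p n) (toPoly p n d) := by
  obtain ⟨m, rfl⟩ : ∃ m, n = m + 1 := ⟨n - 1, by omega⟩
  have hlast : xinv p (m + 1) ^ (m + 1) = -1 := by
    rw [xinv_pow_of_le hn le_rfl, Nat.sub_self, pow_zero]
  have hzero : negashift p (m + 1) hn d 0 = -d (Fin.last m) := rfl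
  have hsucc (i : Fin m) : negashift p (m + 1) hn d i.succ = d i.castSucc := rfl
  rw [aeval_xinv_toPoly, aeval_xinv_toPoly, Finset.mul_sum, Fin.sum_univ_succ,
    Fin.sum_univ_castSucc]
  simp only [hzero, hsucc, mul_smul_comm, ← pow_succ', Fin.val_succ, Fin.val_castSucc,
    Fin.val_zero, Fin.val_last, hlast, pow_zero, neg_smul, smul_neg]
  exact add_comm _ _

variable (p n) in
def negashiftPair (hn : 0 < n) (w : (Fin n → ZMod p) × (Fin n → ZMod p)) :
    (Fin n → ZMod p) × (Fin n → ZMod p) :=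
  (negashift p n hn w.1, negashift p n hn w.2)

variable (p n) in
noncomputable def symplecticPoly (u v : (Fin n → ZMod p) × (Fin n → ZMod p)) : Rpn p n :=
  toR p n u.1 * aeval (xinv p n) (toPoly p n v.2) - toR p n u.2 * aeval (xinv p n) (toPoly p n v.1)

lemma symplecticPoly_negashiftPair (hn : 0 < n) (u v : (Fin n → ZMod p) × (Fin n → ZMod p)) :
    symplecticPoly p n u (negashiftPair p n hn v) = xinv p n * symplecticPoly p n u v := by
  simp only [symplecticPoly, negashiftPair, aeval_xinv_toPoly_negashift]
  ring

lemma symplecticPoly_iterate_negashiftPair (hn : 0 < n)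
    (u v : (Fin n → ZMod p) × (Fin n → ZMod p)) (k : ℕ) :
    symplecticPoly p n u ((negashiftPair p n hn)^[k] v) =
      xinv p n ^ k * symplecticPoly p n u v := by
  induction k with
  | zero => rw [Function.iterate_zero_apply, pow_zero, one_mul]
  | succ k ih =>
    rw [Function.iterate_succ_apply', symplecticPoly_negashiftPair, ih, pow_succ', mul_assoc]

variable [Nontrivial (ZMod p)]

noncomputable def powerBasis (hn : 0 < n) : PowerBasis (ZMod p) (Rpn p n) :=
  AdjoinRoot.powerBasis' (X_pow_add_one_monic hn)

lemma powerBasis_dim (hn : 0 < n) : (powerBasis (p := p) hn).dim = n := by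
  show (X ^ n + 1 : (ZMod p)[X]).natDegree = n
  simpa only [map_one] using natDegree_X_pow_add_C (n := n) (r := (1 : ZMod p))

noncomputable def basis (hn : 0 < n) : Module.Basis (Fin n) (ZMod p) (Rpn p n) :=
  (powerBasis hn).basis.reindex (finCongr (powerBasis_dim hn))

lemma basis_apply (hn : 0 < n) (i : Fin n) : basis (p := p) hn i = mkR p n X ^ (i : ℕ) := by
  rw [basis, Module.Basis.reindex_apply, PowerBasis.basis_eq_pow]
  rfl

noncomputable def constCoeff (hn : 0 < n) : Rpn p n →ₗ[ZMod p] ZMod p :=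
  Finsupp.lapply ⟨0, hn⟩ ∘ₗ (basis hn).repr.toLinearMap

lemma constCoeff_mkR_X_pow (hn : 0 < n) {m : ℕ} (hm : m < n) :
    constCoeff hn (mkR p n X ^ m) = if m = 0 then 1 else 0 := by
  rw [← basis_apply hn ⟨m, hm⟩]
  simp [constCoeff, Finsupp.single_apply, Fin.ext_iff]

lemma constCoeff_mkR_X_pow_mul_xinv_pow (hn : 0 < n) {i j : ℕ} (hi : i < n) (hj : j < n) :
    constCoeff hn (mkR p n X ^ i * xinv p n ^ j) = if i = j then 1 else 0 := by
  have hcancel (k : ℕ) : mkR p n X ^ k * xinv p n ^ k = 1 := by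
    rw [← mul_pow, mul_comm, xinv_mul_mkR_X hn, one_pow]
  rcases le_or_gt j i with hji | hij
  · have h : mkR p n X ^ i * xinv p n ^ j = mkR p n X ^ (i - j) := by
      rw [← Nat.sub_add_cancel hji, pow_add, mul_assoc, hcancel, mul_one, Nat.add_sub_cancel]
    rw [h, constCoeff_mkR_X_pow hn (by omega)]
    exact if_congr (by omega) rfl rfl
  · have h : mkR p n X ^ i * xinv p n ^ j = -mkR p n X ^ (n - (j - i)) := by
      rw [← xinv_pow_of_le hn (by omega : j - i ≤ n), ← Nat.sub_add_cancel hij.le, pow_add,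
        mul_left_comm, hcancel, mul_one, Nat.add_sub_cancel]
    rw [h, map_neg, constCoeff_mkR_X_pow hn (by omega), if_neg (by omega), if_neg hij.ne, neg_zero]

lemma constCoeff_xinv_pow_mul (hn : 0 < n) (k : Fin n) (r : Rpn p n) :
    constCoeff hn (xinv p n ^ (k : ℕ) * r) = (basis hn).repr r k := by
  conv_lhs => rw [← (basis hn).sum_repr r]
  rw [Finset.mul_sum, map_sum]
  have hterm (i : Fin n) : constCoeff hn (xinv p n ^ (k : ℕ) * ((basis hn).repr r i • basis hn i)) =
      if i = k then (basis hn).repr r i else 0 := by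
    rw [mul_smul_comm, map_smul, basis_apply, mul_comm,
      constCoeff_mkR_X_pow_mul_xinv_pow hn i.is_lt k.is_lt]
    simp only [Fin.val_inj, smul_eq_mul, mul_ite, mul_one, mul_zero]
  simp only [hterm, Finset.sum_ite_eq', Finset.mem_univ, if_true]

lemma toR_eq_basis_equivFun_symm (hn : 0 < n) (a : Fin n → ZMod p) :
    toR p n a = (basis hn).equivFun.symm a := by
  rw [Module.Basis.equivFun_symm_apply, toR, toPoly, map_sum]
  refine Finset.sum_congr rfl fun i _ => ?_
  rw [map_mul, map_pow, basis_apply]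
  exact (Algebra.smul_def (a i) (mkR p n X ^ (i : ℕ))).symm

lemma constCoeff_toR_mul_aeval_xinv (hn : 0 < n) (a d : Fin n → ZMod p) :
    constCoeff hn (toR p n a * aeval (xinv p n) (toPoly p n d)) = ∑ j, a j * d j := by
  simp only [aeval_xinv_toPoly, Finset.mul_sum, mul_smul_comm, map_sum, map_smul]
  refine Finset.sum_congr rfl fun j _ => ?_
  rw [mul_comm, constCoeff_xinv_pow_mul, toR_eq_basis_equivFun_symm hn,
    ← Module.Basis.equivFun_apply, LinearEquiv.apply_symm_apply, smul_eq_mul, mul_comm]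

lemma sympForm_eq_constCoeff_symplecticPoly (hn : 0 < n)
    (u v : (Fin n → ZMod p) × (Fin n → ZMod p)) :
    sympForm p n u v = constCoeff hn (symplecticPoly p n u v) := by
  rw [symplecticPoly, map_sub, constCoeff_toR_mul_aeval_xinv, constCoeff_toR_mul_aeval_xinv,
    sympForm]

lemma symplecticPoly_eq_zero_of_sympForm_iterate (hn : 0 < n)
    {u v : (Fin n → ZMod p) × (Fin n → ZMod p)}
    (h : ∀ k, sympForm p n u ((negashiftPair p n hn)^[k] v) = 0) : symplecticPoly p n u v = 0 := by
  refine (basis hn).ext_elem fun k => ?_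
  rw [map_zero, Finsupp.zero_apply, ← constCoeff_xinv_pow_mul,
    ← symplecticPoly_iterate_negashiftPair hn, ← sympForm_eq_constCoeff_symplecticPoly, h]

end Rpn

open Rpn in
theorem stmt3_general (p n : ℕ) [Fact p.Prime] (hn : 0 < n)
    (S : Submodule (ZMod p) ((Fin n → ZMod p) × (Fin n → ZMod p)))
    (hneg : ∀ ab ∈ S, (negashift p n hn ab.1, negashift p n hn ab.2) ∈ S) :
    (∀ u ∈ S, ∀ v ∈ S, sympForm p n u v = 0) ↔
      (∀ u ∈ S, ∀ v ∈ S,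
        toR p n u.1 * aeval (xinv p n) (toPoly p n v.2)
          - toR p n u.2 * aeval (xinv p n) (toPoly p n v.1) = 0) := by
  have hS : Set.MapsTo (negashiftPair p n hn) S S := hneg
  refine ⟨fun hiso u hu v hv => ?_, fun hpoly u hu v hv => ?_⟩
  · exact symplecticPoly_eq_zero_of_sympForm_iterate hn fun k => hiso u hu _ (hS.iterate k hv)
  · rw [sympForm_eq_constCoeff_symplecticPoly hn, symplecticPoly, hpoly u hu v hv, map_zero]

/-- a simultaneously negacyclic subspace `S` is totally isotropic iff for all
`(a,b), (c,d) ∈ S` one has `a(x)·d(x⁻¹) − b(x)·c(x⁻¹) = 0` in `R = F_p[X]/(X^n+1)`. -/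
theorem stmt3 (p n : ℕ) [Fact p.Prime] (hp : Odd p) (hn : 0 < n)
    (S : Submodule (ZMod p) ((Fin n → ZMod p) × (Fin n → ZMod p)))
    (hneg : ∀ ab ∈ S, (negashift p n hn ab.1, negashift p n hn ab.2) ∈ S) :
    (∀ u ∈ S, ∀ v ∈ S, sympForm p n u v = 0) ↔
      (∀ u ∈ S, ∀ v ∈ S,
        toR p n u.1 * aeval (xinv p n) (toPoly p n v.2)
          - toR p n u.2 * aeval (xinv p n) (toPoly p n v.1) = 0) :=
  stmt3_general p n hn S hneg
end

section
/- Let p be an odd prime and S a simultaneously negacyclic subspace of F_p^n × F_p^n, identified with a subset of R × R where R = F_p[X]/(X^n+1). Let g be the monic generator of the ideal of R given by the image of the first projection F = {a : (a,b) ∈ S for some b}. Then there is a unique f ∈ R with (g,f) ∈ S if and only if every element of S of the form (0,b) has b = 0. Moreover, if there is such a unique f (so that (g,f) is the generating pair of S), then S = {(a·g, a·f) : a ∈ R}. -/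
open Polynomial

/-- The identification `F_p^n × F_p^n → R × R`. -/
noncomputable def toR2 (p n : ℕ) (ab : (Fin n → ZMod p) × (Fin n → ZMod p)) :
    Rpn p n × Rpn p n := (toR p n ab.1, toR p n ab.2)

/-! Under `a ↦ a(x)` the negashift becomes multiplication by `x` (because `x ^ n = -1`), so the
image `T` of `S` in `R × R` is an `R`-submodule. The fibres of `T` over a first coordinate are
cosets of `{b | (0, b) ∈ T}`, which gives the uniqueness criterion. If `(g, f) ∈ T` and that
kernel is trivial, then for `(a g, c) ∈ T` the difference `(0, c - a f)` lies in `T`, so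
`c = a f` and `T = R ∙ (g, f)`. -/

namespace Submodule

variable {R M N : Type*}

theorem existsUnique_mk_mem_iff [Ring R] [AddCommGroup M] [AddCommGroup N] [Module R M]
    [Module R N] {T : Submodule R (M × N)} {x : M} (hx : ∃ y, (x, y) ∈ T) :
    (∃! y, (x, y) ∈ T) ↔ ∀ b, (0, b) ∈ T → b = 0 := by
  obtain ⟨y, hy⟩ := hx
  constructor
  · rintro ⟨y', -, huniq⟩ b hb
    have hyb : y + b = y' := huniq _ (by simpa using T.add_mem hy hb)
    rw [← huniq y hy] at hyb
    exact add_eq_left.1 hyb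
  · exact fun h => ⟨y, hy, fun y' hy' => sub_eq_zero.1 (h _ (by simpa using T.sub_mem hy' hy))⟩

theorem eq_span_singleton_of_map_fst_eq [CommRing R] [AddCommGroup N] [Module R N]
    {T : Submodule R (R × N)} {g : R} {f : N}
    (hfst : T.map (LinearMap.fst R R N) = Ideal.span {g}) (hgf : (g, f) ∈ T)
    (hker : ∀ b, (0, b) ∈ T → b = 0) : T = R ∙ (g, f) := by
  refine le_antisymm (fun w hw => ?_) ((span_singleton_le_iff_mem _ _).2 hgf)
  obtain ⟨a, ha⟩ := Ideal.mem_span_singleton'.1 (hfst ▸ mem_map_of_mem hw : w.1 ∈ Ideal.span {g})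
  have hsnd : w.2 - a • f = 0 := hker _ <| by
    convert T.sub_mem hw (T.smul_mem a hgf) using 1
    ext <;> simp [ha]
  exact mem_span_singleton.2 ⟨a, Prod.ext (by simp [ha]) (sub_eq_zero.1 hsnd).symm⟩

theorem forall_mk_zero_mem_map_prodMap_iff [Semiring R] [AddCommMonoid M] [AddCommMonoid N]
    {M' N' : Type*} [AddCommMonoid M'] [AddCommMonoid N'] [Module R M] [Module R N]
    [Module R M'] [Module R N'] {f : M →ₗ[R] M'} {g : N →ₗ[R] N'}
    (hf : Function.Injective f) (hg : Function.Injective g) (S : Submodule R (M × N)) :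
    (∀ b, (0, b) ∈ S.map (f.prodMap g) → b = 0) ↔ ∀ b, (0, b) ∈ S → b = 0 := by
  constructor
  · intro h b hb
    exact hg <| by simpa using h (g b) ⟨(0, b), hb, by simp⟩
  · rintro h b ⟨⟨u, v⟩, huv, hw⟩
    obtain ⟨hu, rfl⟩ := Prod.ext_iff.1 hw
    obtain rfl : u = 0 := hf (by simpa using hu)
    simp [h v huv]

end Submodule

variable {p n : ℕ}

theorem toPoly_coeff (a : Fin n → ZMod p) (k : ℕ) :
    (toPoly p n a).coeff k = if h : k < n then a ⟨k, h⟩ else 0 := by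
  simp only [toPoly, finsetSum_coeff, coeff_C_mul_X_pow]
  split_ifs with h
  · rw [Finset.sum_eq_single ⟨k, h⟩ (fun j _ hj => if_neg fun hk => hj (Fin.ext hk.symm))
      (by simp), if_pos rfl]
  · exact Finset.sum_eq_zero fun j _ => if_neg fun hk : k = j => h (hk ▸ j.isLt)

theorem degree_toPoly_lt (a : Fin n → ZMod p) : (toPoly p n a).degree < n :=
  (degree_lt_iff_coeff_zero _ _).2 fun k hk => by
    rw [toPoly_coeff, dif_neg (by exact_mod_cast hk.not_gt)]

theorem toR_eq_sum (a : Fin n → ZMod p) :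
    toR p n a = ∑ j : Fin n, a j • mkR p n X ^ (j : ℕ) := by
  simp only [toR, toPoly, map_sum, map_mul, map_pow]
  exact Finset.sum_congr rfl fun j _ => (Algebra.smul_def (a j) (mkR p n X ^ (j : ℕ))).symm

noncomputable def toRₗ (p n : ℕ) : (Fin n → ZMod p) →ₗ[ZMod p] Rpn p n :=
  Fintype.linearCombination (ZMod p) fun j : Fin n => mkR p n X ^ (j : ℕ)

theorem coe_toRₗ : ⇑(toRₗ p n) = toR p n :=
  funext fun a => by rw [toRₗ, Fintype.linearCombination_apply, toR_eq_sum]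

noncomputable def toR2ₗ (p n : ℕ) :
    ((Fin n → ZMod p) × (Fin n → ZMod p)) →ₗ[ZMod p] Rpn p n × Rpn p n :=
  (toRₗ p n).prodMap (toRₗ p n)

theorem coe_toR2ₗ : ⇑(toR2ₗ p n) = toR2 p n := by
  rw [toR2ₗ, LinearMap.coe_prodMap, coe_toRₗ]
  rfl

theorem toR_injective (hn : 0 < n) : Function.Injective (toR p n) := by
  nontriviality (ZMod p)
  rw [← coe_toRₗ, ← LinearMap.ker_eq_bot, LinearMap.ker_eq_bot']
  intro a ha
  have hdvd : X ^ n + C 1 ∣ toPoly p n a := by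
    rwa [coe_toRₗ, toR, mkR, Ideal.Quotient.eq_zero_iff_dvd, ← C_1] at ha
  have hpoly : toPoly p n a = 0 := by
    by_contra h
    refine (monic_X_pow_add_C 1 hn.ne').not_dvd_of_degree_lt h ?_ hdvd
    rw [degree_X_pow_add_C hn]
    exact degree_toPoly_lt a
  funext j
  simpa [toPoly_coeff] using congr_arg (coeff · j) hpoly

theorem mkR_X_pow_eq_neg_one : mkR p n X ^ n = -1 := by
  rw [eq_neg_iff_add_eq_zero, ← map_pow, ← map_one (mkR p n), ← map_add, mkR,
    Ideal.Quotient.eq_zero_iff_dvd]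

theorem toR_negashift (hn : 0 < n) (u : Fin n → ZMod p) :
    toR p n (negashift p n hn u) = mkR p n X * toR p n u := by
  obtain ⟨m, rfl⟩ : ∃ m, n = m + 1 := ⟨n - 1, by omega⟩
  rw [toR_eq_sum, toR_eq_sum, Fin.sum_univ_succ, Fin.sum_univ_castSucc, mul_add, Finset.mul_sum]
  have h0 : negashift p (m + 1) hn u 0 = -u (Fin.last m) := by simp [negashift, Fin.last]
  have hs (i : Fin m) : negashift p (m + 1) hn u i.succ = u i.castSucc := by
    simp [negashift, Fin.castSucc, Fin.castAdd, Fin.castLE]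
  simp only [h0, hs, Fin.val_succ, Fin.val_castSucc, Fin.val_last, Fin.val_zero, pow_zero,
    mul_smul_comm, ← pow_succ', mkR_X_pow_eq_neg_one]
  simp [add_comm]

def IsSimultaneouslyNegacyclic (hn : 0 < n)
    (S : Submodule (ZMod p) ((Fin n → ZMod p) × (Fin n → ZMod p))) : Prop :=
  ∀ ab ∈ S, (negashift p n hn ab.1, negashift p n hn ab.2) ∈ S

section Negacyclic

variable {hn : 0 < n} {S : Submodule (ZMod p) ((Fin n → ZMod p) × (Fin n → ZMod p))}

theorem mkR_X_smul_mem (hS : IsSimultaneouslyNegacyclic hn S)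
    {w : Rpn p n × Rpn p n} (hw : w ∈ S.map (toR2ₗ p n)) :
    mkR p n X • w ∈ S.map (toR2ₗ p n) := by
  obtain ⟨⟨u, v⟩, huv, rfl⟩ := hw
  exact ⟨_, hS _ huv, by simp [coe_toR2ₗ, toR2, toR_negashift hn]⟩

theorem mkR_smul_mem (hS : IsSimultaneouslyNegacyclic hn S)
    (q : (ZMod p)[X]) {w : Rpn p n × Rpn p n}
    (hw : w ∈ S.map (toR2ₗ p n)) :
    mkR p n q • w ∈ S.map (toR2ₗ p n) := by
  induction q using Polynomial.induction_on with
  | C a => exact (algebraMap_smul (Rpn p n) a w).symm ▸ Submodule.smul_mem _ a hw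
  | add q r hq hr => rw [map_add, add_smul]; exact Submodule.add_mem _ hq hr
  | monomial k a ih =>
    rw [pow_succ', mul_left_comm, map_mul, ← smul_smul]
    exact mkR_X_smul_mem hS ih

noncomputable def negacyclicSubmodule (hS : IsSimultaneouslyNegacyclic hn S) :
    Submodule (Rpn p n) (Rpn p n × Rpn p n) :=
  { S.map (toR2ₗ p n) with
    smul_mem' := fun r w hw => by
      obtain ⟨q, rfl⟩ := Ideal.Quotient.mk_surjective r
      exact mkR_smul_mem hS q hw }

theorem coe_negacyclicSubmodule (hS : IsSimultaneouslyNegacyclic hn S) :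
    (negacyclicSubmodule hS : Set (Rpn p n × Rpn p n)) = toR2 p n '' S := by
  change toR2ₗ p n '' S = _
  rw [coe_toR2ₗ]

end Negacyclic

theorem stmt4_general (p n : ℕ) (hn : 0 < n)
    (S : Submodule (ZMod p) ((Fin n → ZMod p) × (Fin n → ZMod p)))
    (hneg : ∀ ab ∈ S, (negashift p n hn ab.1, negashift p n hn ab.2) ∈ S)
    (g : Polynomial (ZMod p))
    (hgen : {r : Rpn p n | ∃ ab ∈ S, toR p n ab.1 = r}
        = (Ideal.span {mkR p n g} : Set (Rpn p n))) :
    ((∃! f : Rpn p n,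
        (mkR p n g, f) ∈ toR2 p n '' (S : Set ((Fin n → ZMod p) × (Fin n → ZMod p)))) ↔
      (∀ b : Fin n → ZMod p, ((0 : Fin n → ZMod p), b) ∈ S → b = 0)) ∧
    (∀ f : Rpn p n,
      ((mkR p n g, f) ∈ toR2 p n '' (S : Set ((Fin n → ZMod p) × (Fin n → ZMod p))) ∧
        (∀ f' : Rpn p n,
          (mkR p n g, f') ∈ toR2 p n '' (S : Set ((Fin n → ZMod p) × (Fin n → ZMod p)))
            → f' = f)) →
      toR2 p n '' (S : Set ((Fin n → ZMod p) × (Fin n → ZMod p)))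
        = {w : Rpn p n × Rpn p n | ∃ a : Rpn p n, w = (a * mkR p n g, a * f)}) := by
  set T := negacyclicSubmodule hneg
  have hT : toR2 p n '' S = T := (coe_negacyclicSubmodule hneg).symm
  have hfst : T.map (LinearMap.fst _ _ _) = Ideal.span {mkR p n g} := by
    refine SetLike.coe_injective ?_
    rw [← hgen, Submodule.map_coe, ← hT]
    ext r
    simp [toR2]
  have hg : ∃ f, (mkR p n g, f) ∈ T := by
    obtain ⟨w, hw, hw1⟩ := hfst ▸ Ideal.mem_span_singleton_self (mkR p n g)
    exact ⟨w.2, by simpa [← hw1] using hw⟩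
  have hker : (∀ b, (0, b) ∈ S → b = 0) ↔ ∀ b, (0, b) ∈ T → b = 0 := by
    have hinj : Function.Injective (toRₗ p n) := coe_toRₗ ▸ toR_injective hn
    exact (Submodule.forall_mk_zero_mem_map_prodMap_iff hinj hinj S).symm
  simp only [hT, SetLike.mem_coe, hker]
  refine ⟨Submodule.existsUnique_mk_mem_iff hg, fun f ⟨hgf, huniq⟩ => ?_⟩
  rw [Submodule.eq_span_singleton_of_map_fst_eq hfst hgf
    ((Submodule.existsUnique_mk_mem_iff hg).1 ⟨f, hgf, huniq⟩)]
  ext w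
  simp [Submodule.mem_span_singleton, eq_comm]

/-- for a simultaneously negacyclic subspace `S` with monic generator `g`
for the ideal of `R` given by the first projection of `S`: there is a unique `f ∈ R` with
`(g, f) ∈ S` iff every element of `S` of the form `(0, b)` has `b = 0`; moreover when such
a unique `f` exists, `S = {(a·g, a·f) : a ∈ R}`. -/
theorem stmt4 (p n : ℕ) [Fact p.Prime] (hp : Odd p) (hn : 0 < n)
    (S : Submodule (ZMod p) ((Fin n → ZMod p) × (Fin n → ZMod p)))
    (hneg : ∀ ab ∈ S, (negashift p n hn ab.1, negashift p n hn ab.2) ∈ S)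
    (g : Polynomial (ZMod p)) (hgm : g.Monic) (hgdvd : g ∣ X ^ n + 1)
    (hgen : {r : Rpn p n | ∃ ab ∈ S, toR p n ab.1 = r}
        = (Ideal.span {mkR p n g} : Set (Rpn p n))) :
    ((∃! f : Rpn p n,
        (mkR p n g, f) ∈ toR2 p n '' (S : Set ((Fin n → ZMod p) × (Fin n → ZMod p)))) ↔
      (∀ b : Fin n → ZMod p, ((0 : Fin n → ZMod p), b) ∈ S → b = 0)) ∧
    (∀ f : Rpn p n,
      ((mkR p n g, f) ∈ toR2 p n '' (S : Set ((Fin n → ZMod p) × (Fin n → ZMod p))) ∧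
        (∀ f' : Rpn p n,
          (mkR p n g, f') ∈ toR2 p n '' (S : Set ((Fin n → ZMod p) × (Fin n → ZMod p)))
            → f' = f)) →
      toR2 p n '' (S : Set ((Fin n → ZMod p) × (Fin n → ZMod p)))
        = {w : Rpn p n × Rpn p n | ∃ a : Rpn p n, w = (a * mkR p n g, a * f)}) :=
  stmt4_general p n hn S hneg g hgen
end

section
/- Let p be an odd prime and suppose n divides p^t + 1 for some positive integer t with (p^t+1)/n an odd integer. Then every irreducible factor of X^n + 1 over F_p of degree at least 2 has even degree. -/
open Polynomial

/-!
Let `α` be a root of `f` in `F_{p^d}`, `d = deg f`. As `n * q = p^t + 1` with `q` odd,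
`α^(p^t + 1) = -1`, so `σ = Frob^t` sends `α` to `-α⁻¹`; hence `σ²` fixes `α`. Since `σ^d = 1` on
`F_{p^d}`, an odd `d` forces `σ α = α`, i.e. `α² = -1`. Then `f ∣ X² + 1`, so `d ≤ 2`.
-/

theorem isPeriodicPt_two_of_map_eq_neg_inv {K : Type*} [DivisionRing K] {σ : K →+* K} {α : K}
    (hσ : σ α = -α⁻¹) : Function.IsPeriodicPt σ 2 α := by
  change σ (σ α) = α
  rw [hσ, map_neg, map_inv₀, hσ, inv_neg, inv_inv, neg_neg]

theorem eq_neg_inv_of_iterate_odd_eq_self {K : Type*} [DivisionRing K] {σ : K →+* K} {α : K}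
    (hσ : σ α = -α⁻¹) {d : ℕ} (hd : Odd d) (hfix : σ^[d] α = α) : α = -α⁻¹ := by
  calc α = σ^[d % 2] α := by rw [(isPeriodicPt_two_of_map_eq_neg_inv hσ).iterate_mod_apply, hfix]
    _ = -α⁻¹ := by rw [Nat.odd_iff.mp hd, Function.iterate_one, hσ]

theorem FiniteField.sq_eq_neg_one_of_pow_add_one_eq_neg_one {K : Type*} [Field K] [Finite K]
    {p : ℕ} [Fact p.Prime] [CharP K p] {d : ℕ} (hcard : Nat.card K = p ^ d) (hd : Odd d) {t : ℕ}
    {α : K} (hα : α ^ (p ^ t + 1) = -1) : α ^ 2 = -1 := by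
  have := Fintype.ofFinite K
  have hα0 : α ≠ 0 := by
    rintro rfl
    simp at hα
  set σ := frobenius K p ^ t
  have hσ : σ α = -α⁻¹ := by
    rw [eq_neg_iff_add_eq_zero, ← mul_left_inj' hα0, add_mul, inv_mul_cancel₀ hα0, zero_mul,
      RingHom.coe_pow, iterate_frobenius, ← pow_succ, hα, neg_add_cancel]
  have hfix : σ^[d] α = α := by
    rw [← RingHom.coe_pow, ← pow_mul, mul_comm, pow_mul,
      FiniteField.frobenius_pow (Nat.card_eq_fintype_card.symm.trans hcard), one_pow,
      RingHom.one_def, RingHom.id_apply]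
  have h := eq_neg_inv_of_iterate_odd_eq_self hσ hd hfix
  rw [sq]
  nth_rw 2 [h]
  rw [mul_neg, mul_inv_cancel₀ hα0]

theorem AdjoinRoot.natCard_eq_pow_natDegree {p : ℕ} [Fact p.Prime] {f : (ZMod p)[X]}
    (hf : f ≠ 0) : Nat.card (AdjoinRoot f) = p ^ f.natDegree := by
  have := (AdjoinRoot.powerBasis hf).finite
  rw [Module.natCard_eq_pow_finrank (K := ZMod p), Nat.card_zmod,
    (AdjoinRoot.powerBasis hf).finrank, AdjoinRoot.powerBasis_dim]

theorem dvd_X_sq_add_one_of_dvd_X_pow_add_one {p : ℕ} [Fact p.Prime] {f : (ZMod p)[X]}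
    (hf : Irreducible f) (hd : Odd f.natDegree) {t : ℕ} (hft : f ∣ X ^ (p ^ t + 1) + 1) :
    f ∣ X ^ 2 + 1 := by
  have := Fact.mk hf
  have := (AdjoinRoot.powerBasis hf.ne_zero).finite
  have := Module.finite_of_finite (ZMod p) (M := AdjoinRoot f)
  have := charP_of_injective_algebraMap (algebraMap (ZMod p) (AdjoinRoot f)).injective p
  have hroot : AdjoinRoot.root f ^ (p ^ t + 1) = -1 := by
    rw [eq_neg_iff_add_eq_zero]
    simpa using AdjoinRoot.mk_eq_zero.mpr hft
  rw [← AdjoinRoot.mk_eq_zero]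
  simp [FiniteField.sq_eq_neg_one_of_pow_add_one_eq_neg_one
    (AdjoinRoot.natCard_eq_pow_natDegree hf.ne_zero) hd hroot]

theorem stmt9_general (p n t : ℕ) [Fact p.Prime]
    (hdvd : n ∣ p ^ t + 1) (hq : Odd ((p ^ t + 1) / n))
    (f : Polynomial (ZMod p)) (hf : Irreducible f)
    (hfd : f ∣ X ^ n + 1) (hdeg : 2 ≤ f.natDegree) :
    Even f.natDegree := by
  refine (Nat.even_or_odd _).resolve_right fun hodd => ?_
  have hft : f ∣ X ^ (p ^ t + 1) + 1 := by
    have := hq.add_dvd_pow_add_pow (X ^ n : (ZMod p)[X]) 1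
    rw [← pow_mul, Nat.mul_div_cancel' hdvd, one_pow] at this
    exact hfd.trans this
  have hle := natDegree_le_of_dvd (dvd_X_sq_add_one_of_dvd_X_pow_add_one hf hodd hft)
    (X_pow_add_C_ne_zero two_pos 1)
  have h2 : (X ^ 2 + 1 : (ZMod p)[X]).natDegree = 2 := by compute_degree!
  rw [h2] at hle
  rw [le_antisymm hle hdeg] at hodd
  exact Nat.not_odd_iff_even.mpr even_two hodd

/-- if `n ∣ p^t + 1` with `(p^t+1)/n` odd, then every irreducible factor of
`X^n + 1` over `F_p` of degree at least 2 has even degree. -/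
theorem stmt9 (p n t : ℕ) [Fact p.Prime] (hp : Odd p) (ht : 0 < t) (hn : 0 < n)
    (hdvd : n ∣ p ^ t + 1) (hq : Odd ((p ^ t + 1) / n))
    (f : Polynomial (ZMod p)) (hf : Irreducible f)
    (hfd : f ∣ X ^ n + 1) (hdeg : 2 ≤ f.natDegree) :
    Even f.natDegree :=
  stmt9_general p n t hdvd hq f hf hfd hdeg
end

section
/- Let p be an odd prime and suppose n divides p^t + 1 for some positive integer t with (p^t+1)/n an odd integer. If α ∈ F_p satisfies α^n = −1 (i.e., X − α is a linear factor of X^n + 1 over F_p), then α² = −1; consequently, if X^n + 1 has a root in F_p then p ≡ 1 (mod 4). -/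
/-- if `n ∣ p^t + 1` with `(p^t+1)/n` odd, then any `α ∈ F_p` with
`α^n = −1` satisfies `α² = −1`; consequently if `X^n + 1` has a root in `F_p` then
`p ≡ 1 (mod 4)`. -/
theorem stmt11 (p n t : ℕ) [Fact p.Prime] (hp : Odd p) (ht : 0 < t) (hn : 0 < n)
    (hdvd : n ∣ p ^ t + 1) (hq : Odd ((p ^ t + 1) / n)) :
    (∀ α : ZMod p, α ^ n = -1 → α ^ 2 = -1) ∧
    ((∃ α : ZMod p, α ^ n = -1) → p % 4 = 1) := by
  have key : ∀ α : ZMod p, α ^ n = -1 → α ^ 2 = -1 := by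
    intro α hα
    obtain ⟨m, hm⟩ := hdvd
    have hmodd : Odd m := by
      have : (p ^ t + 1) / n = m := by rw [hm]; exact Nat.mul_div_cancel_left m hn
      rwa [this] at hq
    have h1 : α ^ (p ^ t + 1) = -1 := by
      rw [hm, pow_mul, hα, hmodd.neg_one_pow]
    have h2 : α ^ (p ^ t + 1) = α ^ 2 := by
      rw [pow_succ, ZMod.pow_card_pow, sq]
    rw [← h2, h1]
  refine ⟨key, ?_⟩
  rintro ⟨α, hα⟩
  have hsq : IsSquare (-1 : ZMod p) := ⟨α, by rw [← key α hα]; ring⟩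
  have h3 := (ZMod.exists_sq_eq_neg_one_iff (p := p)).mp hsq
  have hp2 : p % 2 = 1 := Nat.odd_iff.mp hp
  omega
end

section
/- Let q = p^k for an odd prime p, and let n be a positive integer with gcd(n, q) = 1. Let f ∈ F_q[X] be a monic divisor of X^n + 1. Suppose there exist a primitive 2n-th root of unity β in an algebraic closure of F_q, an odd integer ℓ, and an integer d ≥ 1 such that β^{ℓ+2j} is a root of f for every j = 0, 1, …, d−2. Then every nonzero polynomial c ∈ F_q[X] with deg c < n and f ∣ c has at least d nonzero coefficients; equivalently, the classical negacyclic code of length n generated by f has minimum Hamming distance at least d. -/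
open Polynomial

/-- BCH bound for classical negacyclic codes: if `f` is a monic divisor
of `X^n + 1` over `F_q` (`q = p^k`, `gcd(n,q) = 1`) having `β^ℓ, β^{ℓ+2}, …, β^{ℓ+2(d−2)}`
among its roots for some primitive `2n`-th root of unity `β` in an algebraic closure and
some odd integer `ℓ`, then every nonzero `c ∈ F_q[X]` with `deg c < n` and `f ∣ c` has at
least `d` nonzero coefficients; i.e. the negacyclic code generated by `f` has minimum
Hamming distance at least `d`. -/
theorem stmt15 (p k n : ℕ) [Fact p.Prime] (hp : Odd p) (hk : 0 < k) (hn : 0 < n)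
    (hgcd : Nat.gcd n (p ^ k) = 1)
    (f : Polynomial (GaloisField p k)) (hfm : f.Monic) (hfd : f ∣ X ^ n + 1)
    (β : AlgebraicClosure (GaloisField p k)) (hβ : IsPrimitiveRoot β (2 * n))
    (ℓ : ℤ) (hℓ : Odd ℓ) (d : ℕ) (hd : 1 ≤ d)
    (hroots : ∀ j : ℕ, j + 2 ≤ d → aeval (β ^ (ℓ + 2 * (j : ℤ))) f = 0) :
    ∀ c : Polynomial (GaloisField p k), c ≠ 0 → c.degree < n → f ∣ c →
      d ≤ c.support.card := by
  intro c hc hdeg hdvd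
  by_contra hlt
  push_neg at hlt
  have hβ0 : β ≠ 0 := hβ.ne_zero (by omega)
  have hβ2 : IsPrimitiveRoot (β ^ 2) n := hβ.pow (by omega) rfl
  have hnat : c.natDegree < n := (Polynomial.natDegree_lt_iff_degree_lt hc).mpr hdeg
  set w := c.support.card with hw
  set σ := c.support.orderIsoOfFin rfl with hσ
  have hiw : ∀ s : Fin w, ((σ s : ℕ)) < n := fun s =>
    lt_of_le_of_lt (Polynomial.le_natDegree_of_mem_supp _ (σ s).2) hnat
  set u : Fin w → (AlgebraicClosure (GaloisField p k)) := fun s => algebraMap (GaloisField p k) (AlgebraicClosure (GaloisField p k)) (c.coeff (σ s))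
      * β ^ (ℓ * ((σ s : ℕ) : ℤ)) with hu
  set x : Fin w → (AlgebraicClosure (GaloisField p k)) := fun s => β ^ (2 * (σ s : ℕ)) with hx
  have hxinj : Function.Injective x := by
    intro s t h
    apply σ.injective
    ext
    apply hβ2.pow_inj (hiw s) (hiw t)
    simpa only [hx, ← pow_mul, mul_comm] using h
  have key : ∀ (i j : ℕ), β ^ (ℓ * (i : ℤ)) * (β ^ (2 * i)) ^ j
      = (β ^ (ℓ + 2 * (j : ℤ))) ^ i := by
    intro i j
    rw [← zpow_natCast β (2 * i), ← zpow_natCast (β ^ ((2 * i : ℕ) : ℤ)) j,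
        ← zpow_mul, ← zpow_add₀ hβ0,
        ← zpow_natCast (β ^ (ℓ + 2 * (j : ℤ))) i, ← zpow_mul]
    congr 1
    push_cast
    ring
  have hsum : ∀ jf : Fin w, (∑ s : Fin w, u s * x s ^ (jf : ℕ)) = 0 := by
    intro jf
    obtain ⟨g, hg⟩ := hdvd
    have hroot : aeval (β ^ (ℓ + 2 * ((jf : ℕ) : ℤ))) c = 0 := by
      rw [hg, map_mul, hroots jf (by omega), zero_mul]
    rw [Polynomial.aeval_def, Polynomial.eval₂_eq_sum, Polynomial.sum_def] at hroot
    calc (∑ s : Fin w, u s * x s ^ (jf : ℕ))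
        = ∑ s : Fin w, (fun i : ℕ => algebraMap (GaloisField p k) (AlgebraicClosure (GaloisField p k)) (c.coeff i)
            * (β ^ (ℓ + 2 * ((jf : ℕ) : ℤ))) ^ i) ((σ s : ℕ)) := by
          refine Finset.sum_congr rfl fun s _ => ?_
          simp only [hu, hx]
          rw [mul_assoc, key]
      _ = ∑ i ∈ c.support, algebraMap (GaloisField p k) (AlgebraicClosure (GaloisField p k)) (c.coeff i)
            * (β ^ (ℓ + 2 * ((jf : ℕ) : ℤ))) ^ i := by
          exact (Fintype.sum_equiv σ.toEquiv _
              (fun a : c.support => algebraMap (GaloisField p k)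
                (AlgebraicClosure (GaloisField p k)) (c.coeff a)
                * (β ^ (ℓ + 2 * ((jf : ℕ) : ℤ))) ^ (a : ℕ)) (fun s => rfl)).trans
            (Finset.sum_coe_sort c.support (fun i => algebraMap (GaloisField p k)
              (AlgebraicClosure (GaloisField p k)) (c.coeff i)
              * (β ^ (ℓ + 2 * ((jf : ℕ) : ℤ))) ^ i))
      _ = 0 := hroot
  have hu0 : u = 0 := Matrix.eq_zero_of_forall_pow_sum_mul_pow_eq_zero hxinj hsum
  obtain ⟨i, hi⟩ := Polynomial.nonempty_support_iff.mpr hc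
  have : u (σ.symm ⟨i, hi⟩) = 0 := by rw [hu0]; rfl
  simp only [hu, OrderIso.apply_symm_apply] at this
  rcases mul_eq_zero.mp this with h | h
  · exact (Polynomial.mem_support_iff.mp hi)
      ((_root_.map_eq_zero (algebraMap (GaloisField p k) (AlgebraicClosure (GaloisField p k)))).mp h)
  · exact zpow_ne_zero _ hβ0 h
end

section
/- Let p be an odd prime, n a positive integer with gcd(n,p) = 1, η ∈ F_{p^2} \ F_p, and Φ : F_p^n × F_p^n → F_{p^2}[X]/(X^n+1) the identification (a,b) ↦ a + ηb (coordinatewise, then a vector c ↦ ∑_j c_j x^j). Let S be a subspace of F_p^n × F_p^n with S ⊆ S^⊥, and suppose Φ(S^⊥) equals the ideal generated by a monic divisor h of X^n + 1 over F_{p^2}. If there exist a primitive 2n-th root of unity β in an algebraic closure of F_{p^2}, an odd integer ℓ, and d ≥ 1 such that β^{ℓ+2j} is a root of h for all j = 0, …, d−2 (i.e., the BCH distance of h is at least d), then every nonzero element (a,b) of S^⊥ has joint weight at least d; in particular the minimum distance of the associated stabilizer code, the minimum joint weight over S^⊥ \ S, is at least d. -/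
open Polynomial

/-- The symplectic dual of a subset of `F_p^n × F_p^n`. -/
def sympDual (p n : ℕ) (S : Set ((Fin n → ZMod p) × (Fin n → ZMod p))) :
    Set ((Fin n → ZMod p) × (Fin n → ZMod p)) :=
  {u | ∀ v ∈ S, sympForm p n u v = 0}

/-- The joint weight of a pair `(a,b) ∈ F_p^n × F_p^n`:
`wt(a,b) = #{j : (a_j, b_j) ≠ (0,0)}`. -/
def jointWt (p n : ℕ) (ab : (Fin n → ZMod p) × (Fin n → ZMod p)) : ℕ :=
  (Finset.univ.filter fun j : Fin n => ab.1 j ≠ 0 ∨ ab.2 j ≠ 0).card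

/-- The ring `R(η) = F_{p²}[X]/(X^n + 1)`. -/
abbrev Rpn2 (p n : ℕ) [Fact p.Prime] :=
  Polynomial (GaloisField p 2) ⧸ Ideal.span {(X : Polynomial (GaloisField p 2)) ^ n + 1}

/-- The quotient map `F_{p²}[X] → R(η)`. -/
noncomputable def mkR2 (p n : ℕ) [Fact p.Prime] : Polynomial (GaloisField p 2) →+* Rpn2 p n :=
  Ideal.Quotient.mk (Ideal.span {(X : Polynomial (GaloisField p 2)) ^ n + 1})

/-- The identification `Φ : F_p^n × F_p^n → R(η)`, `(a,b) ↦ a + ηb`. -/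
noncomputable def PhiMap (p n : ℕ) [Fact p.Prime] (η : GaloisField p 2)
    (ab : (Fin n → ZMod p) × (Fin n → ZMod p)) : Rpn2 p n :=
  mkR2 p n (∑ j : Fin n,
    C (algebraMap (ZMod p) (GaloisField p 2) (ab.1 j)
        + η * algebraMap (ZMod p) (GaloisField p 2) (ab.2 j)) * X ^ (j : ℕ))

/-! Since `η ∉ 𝔽_p`, the coordinates `j` with `(a_j, b_j) ≠ (0, 0)` are exactly the nonzero
coefficients of the representative `f = ∑ (a_j + η b_j) X^j` of `Φ(a, b)`, and `Φ(a, b) ∈ (h)`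
with `h ∣ X^n + 1` gives `h ∣ f`. Hence `f` vanishes at `β^ℓ γ^i` for `i < d - 1`, where
`γ = β²` is a primitive `n`-th root of unity. Written in the nonzero coefficients of `f`, these
equations form a Vandermonde system with distinct nodes `γ^k`; if `f` had at most `d - 1` nonzero
coefficients, already its first rows would form an invertible square system, forcing `f = 0`. -/

open Finset

theorem Finset.eq_zero_of_forall_sum_mul_pow_eq_zero {ι R : Type*} [CommRing R] [IsDomain R]
    {s : Finset ι} {x v : ι → R} (hx : Set.InjOn x s)
    (hsum : ∀ i < #s, ∑ k ∈ s, v k * x k ^ i = 0) : ∀ k ∈ s, v k = 0 := by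
  let e : Fin #s ≃ s := s.equivFin.symm
  have hv : (fun j => v (e j)) = 0 := by
    refine Matrix.eq_zero_of_forall_pow_sum_mul_pow_eq_zero (f := fun j => x (e j)) ?_ fun i => ?_
    · intro j j' hjj'
      exact e.injective (Subtype.ext (hx (e j).2 (e j').2 hjj'))
    · rw [← hsum i i.2, ← s.sum_coe_sort]
      exact e.sum_comp fun k : s => v k * x k ^ (i : ℕ)
  intro k hk
  simpa using congrFun hv (e.symm ⟨k, hk⟩)

theorem Polynomial.lt_card_support_of_aeval_mul_pow_eq_zero {K L : Type*} [Field K] [Field L]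
    [Algebra K L] {f : K[X]} (hf : f ≠ 0) {α γ : L} (hα : α ≠ 0)
    (hγ : Set.InjOn (γ ^ ·) (f.support : Set ℕ)) {m : ℕ}
    (hroots : ∀ i < m, aeval (α * γ ^ i) f = 0) : m < #f.support := by
  by_contra! hle
  obtain ⟨k, hk⟩ := support_nonempty.mpr hf
  have hvanish := Finset.eq_zero_of_forall_sum_mul_pow_eq_zero
    (v := fun k => algebraMap K L (f.coeff k) * α ^ k) hγ fun i hi => by
      rw [← hroots i (hi.trans_le hle), aeval_def, eval₂_eq_sum, sum_def]
      refine Finset.sum_congr rfl fun k _ => ?_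
      rw [mul_pow, ← pow_mul, pow_mul', mul_assoc]
  exact mul_ne_zero ((_root_.map_ne_zero _).mpr (mem_support_iff.mp hk)) (pow_ne_zero k hα)
    (hvanish k hk)

theorem algebraMap_add_mul_algebraMap_eq_zero_iff {K L : Type*} [Field K] [Field L] [Algebra K L]
    {η : L} (hη : η ∉ Set.range (algebraMap K L)) {a b : K} :
    algebraMap K L a + η * algebraMap K L b = 0 ↔ a = 0 ∧ b = 0 := by
  refine ⟨fun h => ?_, fun ⟨ha, hb⟩ => by simp [ha, hb]⟩
  obtain rfl | hb := eq_or_ne b 0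
  · simpa using h
  refine absurd ⟨-a / b, ?_⟩ hη
  have hb' : algebraMap K L b ≠ 0 := (_root_.map_ne_zero _).mpr hb
  rw [map_div₀, map_neg, div_eq_iff hb']
  linear_combination -h

theorem Polynomial.support_sum_fin_C_mul_X_pow {R : Type*} [Semiring R] [DecidableEq R] {n : ℕ}
    (c : Fin n → R) :
    (∑ j : Fin n, C (c j) * X ^ (j : ℕ)).support
      = (univ.filter (c · ≠ 0)).map Fin.valEmbedding := by
  ext k
  simp only [mem_support_iff, finsetSum_coeff, coeff_C_mul_X_pow, mem_map, mem_filter_univ,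
    Fin.valEmbedding_apply]
  constructor
  · intro hk
    obtain ⟨j, -, hj⟩ := Finset.exists_ne_zero_of_sum_ne_zero hk
    obtain rfl : k = j := by by_contra h; simp [h] at hj
    exact ⟨j, by simpa using hj, rfl⟩
  · rintro ⟨j, hj, rfl⟩
    rwa [Finset.sum_eq_single j (fun i _ hij => if_neg (Fin.val_injective.ne hij.symm)) (by simp),
      if_pos rfl]

theorem Ideal.dvd_of_mk_dvd_mk {R : Type*} [CommRing R] {q f h : R} (hq : h ∣ q)
    (hdvd : Ideal.Quotient.mk (Ideal.span {q}) h ∣ Ideal.Quotient.mk (Ideal.span {q}) f) :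
    h ∣ f := by
  obtain ⟨g, hg⟩ := hdvd
  obtain ⟨g, rfl⟩ := Ideal.Quotient.mk_surjective g
  rw [← map_mul, Ideal.Quotient.eq, Ideal.mem_span_singleton] at hg
  simpa using dvd_add (hq.trans hg) (dvd_mul_right h g)

section

variable {p n : ℕ} [Fact p.Prime]

noncomputable def phiPoly (η : GaloisField p 2) (ab : (Fin n → ZMod p) × (Fin n → ZMod p)) :
    (GaloisField p 2)[X] :=
  ∑ j : Fin n, C (algebraMap (ZMod p) (GaloisField p 2) (ab.1 j)
    + η * algebraMap (ZMod p) (GaloisField p 2) (ab.2 j)) * X ^ (j : ℕ)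

theorem support_phiPoly_subset_range (η : GaloisField p 2)
    (ab : (Fin n → ZMod p) × (Fin n → ZMod p)) : (phiPoly η ab).support ⊆ range n := by
  classical
  rw [phiPoly, support_sum_fin_C_mul_X_pow]
  intro k hk
  obtain ⟨j, -, rfl⟩ := mem_map.mp hk
  exact mem_range.mpr j.2

theorem card_support_phiPoly {η : GaloisField p 2}
    (hη : η ∉ Set.range (algebraMap (ZMod p) (GaloisField p 2)))
    (ab : (Fin n → ZMod p) × (Fin n → ZMod p)) :
    #(phiPoly η ab).support = jointWt p n ab := by
  classical
  rw [phiPoly, support_sum_fin_C_mul_X_pow, card_map, jointWt]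
  congr 1
  refine filter_congr fun j _ => ?_
  rw [Ne, algebraMap_add_mul_algebraMap_eq_zero_iff hη]
  tauto

theorem jointWt_pos {ab : (Fin n → ZMod p) × (Fin n → ZMod p)} (hab : ab ≠ 0) :
    0 < jointWt p n ab := by
  obtain ⟨j, hj⟩ : ∃ j, ab.1 j ≠ 0 ∨ ab.2 j ≠ 0 := by
    by_contra! h0
    exact hab (Prod.ext (funext fun j => (h0 j).1) (funext fun j => (h0 j).2))
  exact card_pos.mpr ⟨j, by simpa using hj⟩

end

theorem stmt16_general (p n : ℕ) [Fact p.Prime] (hn : 0 < n)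
    (η : GaloisField p 2) (hη : η ∉ Set.range (algebraMap (ZMod p) (GaloisField p 2)))
    (S : Submodule (ZMod p) ((Fin n → ZMod p) × (Fin n → ZMod p)))
    (h : Polynomial (GaloisField p 2)) (hhdvd : h ∣ X ^ n + 1)
    (hgen : PhiMap p n η '' sympDual p n (S : Set ((Fin n → ZMod p) × (Fin n → ZMod p)))
        = (Ideal.span {mkR2 p n h} : Set (Rpn2 p n)))
    (β : AlgebraicClosure (GaloisField p 2)) (hβ : IsPrimitiveRoot β (2 * n))
    (ℓ : ℤ) (d : ℕ)
    (hroots : ∀ j : ℕ, j + 2 ≤ d → aeval (β ^ (ℓ + 2 * (j : ℤ))) h = 0) :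
    (∀ ab ∈ sympDual p n (S : Set ((Fin n → ZMod p) × (Fin n → ZMod p))),
      ab ≠ 0 → d ≤ jointWt p n ab) ∧
    (∀ ab ∈ sympDual p n (S : Set ((Fin n → ZMod p) × (Fin n → ZMod p))),
      ab ∉ S → d ≤ jointWt p n ab) := by
  have hβ0 : β ≠ 0 := hβ.ne_zero (by positivity)
  have hβ2 : IsPrimitiveRoot (β ^ 2) n := hβ.pow (by positivity) rfl
  have hzeros : ∀ i : ℕ, β ^ ℓ * (β ^ 2) ^ i = β ^ (ℓ + 2 * (i : ℤ)) := fun i => by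
    rw [zpow_add₀ hβ0, zpow_mul]
    norm_cast
  have key : ∀ ab ∈ sympDual p n (S : Set ((Fin n → ZMod p) × (Fin n → ZMod p))),
      ab ≠ 0 → d ≤ jointWt p n ab := by
    intro ab hab hab0
    obtain ⟨q, hq⟩ : h ∣ phiPoly η ab := by
      have hmem : mkR2 p n (phiPoly η ab) ∈ (Ideal.span {mkR2 p n h} : Set (Rpn2 p n)) :=
        hgen ▸ ⟨ab, hab, rfl⟩
      exact Ideal.dvd_of_mk_dvd_mk hhdvd (Ideal.mem_span_singleton.mp hmem)
    have hf : phiPoly η ab ≠ 0 := fun hf =>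
      (jointWt_pos hab0).ne (by simpa [hf] using card_support_phiPoly hη ab)
    have hbch := lt_card_support_of_aeval_mul_pow_eq_zero hf (zpow_ne_zero ℓ hβ0)
      (hβ2.injOn_pow.mono (by exact_mod_cast support_phiPoly_subset_range η ab)) (m := d - 1)
      fun i hi => by rw [hq, map_mul, hzeros, hroots i (by omega), zero_mul]
    rw [card_support_phiPoly hη] at hbch
    omega
  exact ⟨key, fun ab hab habS => key ab hab (by rintro rfl; exact habS S.zero_mem)⟩

/-- BCH bound for linear negacyclic quantum stabilizer codes: if
`S ⊆ S^⊥`, `Φ(S^⊥)` is the ideal generated by a monic divisor `h` of `X^n+1`, and `h`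
has BCH distance at least `d`, then every nonzero element of `S^⊥` has joint weight at
least `d`; in particular the minimum distance (minimum joint weight on `S^⊥ \ S`) is at
least `d`. -/
theorem stmt16 (p n : ℕ) [Fact p.Prime] (hp : Odd p) (hn : 0 < n)
    (hgcd : Nat.gcd n p = 1)
    (η : GaloisField p 2) (hη : η ∉ Set.range (algebraMap (ZMod p) (GaloisField p 2)))
    (S : Submodule (ZMod p) ((Fin n → ZMod p) × (Fin n → ZMod p)))
    (hiso : (S : Set ((Fin n → ZMod p) × (Fin n → ZMod p)))
        ⊆ sympDual p n (S : Set ((Fin n → ZMod p) × (Fin n → ZMod p))))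
    (h : Polynomial (GaloisField p 2)) (hhm : h.Monic) (hhdvd : h ∣ X ^ n + 1)
    (hgen : PhiMap p n η '' sympDual p n (S : Set ((Fin n → ZMod p) × (Fin n → ZMod p)))
        = (Ideal.span {mkR2 p n h} : Set (Rpn2 p n)))
    (β : AlgebraicClosure (GaloisField p 2)) (hβ : IsPrimitiveRoot β (2 * n))
    (ℓ : ℤ) (hℓ : Odd ℓ) (d : ℕ) (hd : 1 ≤ d)
    (hroots : ∀ j : ℕ, j + 2 ≤ d → aeval (β ^ (ℓ + 2 * (j : ℤ))) h = 0) :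
    (∀ ab ∈ sympDual p n (S : Set ((Fin n → ZMod p) × (Fin n → ZMod p))),
      ab ≠ 0 → d ≤ jointWt p n ab) ∧
    (∀ ab ∈ sympDual p n (S : Set ((Fin n → ZMod p) × (Fin n → ZMod p))),
      ab ∉ S → d ≤ jointWt p n ab) :=
  stmt16_general p n hn η hη S h hhdvd hgen β hβ ℓ d hroots
end

section
/- Let p be an odd prime, n a positive integer, R = F_p[X]/(X^n+1), g a monic divisor of X^n + 1 in F_p[X], and a ∈ R. Then the subspace S = {(u·ḡ, u·a·ḡ) : u ∈ R} of R × R ≅ F_p^n × F_p^n (where ḡ is the image of g in R) has dimension n − deg g as a vector space over F_p. (Hence the stabilizer dimension of the associated km-Frobenius negacyclic code equals deg g.) -/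
/-!
Since `R` is commutative, `(u ḡ, u a ḡ) = (x, a x)` with `x = u ḡ`, so `S` is the graph of
multiplication by `a` on the ideal `(ḡ)` of `R`, and has the dimension of `(ḡ)`. As `g ∣ X^n + 1`,
`R/(ḡ) ≅ F_p[X]/(g)` has dimension `deg g`, hence `(ḡ)` has dimension `n − deg g`.
-/

open Polynomial

namespace Polynomial

theorem monic_X_pow_add_one {R : Type*} [Semiring R] [Nontrivial R] {n : ℕ} (hn : 0 < n) :
    (X ^ n + 1 : R[X]).Monic :=
  leadingCoeff_X_pow_add_one hn

theorem natDegree_X_pow_add_one {R : Type*} [Semiring R] [Nontrivial R] (n : ℕ) :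
    (X ^ n + 1 : R[X]).natDegree = n := by
  rw [← C_1, natDegree_X_pow_add_C]

end Polynomial

theorem LinearMap.finrank_range_prod_comp {K M N P : Type*} [Semiring K] [AddCommMonoid M]
    [AddCommMonoid N] [AddCommMonoid P] [Module K M] [Module K N] [Module K P]
    (ψ : M →ₗ[K] N) (h : N →ₗ[K] P) :
    Module.finrank K (ψ.prod (h ∘ₗ ψ)).range = Module.finrank K ψ.range := by
  have hgraph : ψ.prod (h ∘ₗ ψ) = (LinearMap.id.prod h) ∘ₗ ψ := rfl
  have hinj : Function.Injective (LinearMap.id.prod h : N →ₗ[K] N × P) :=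
    fun _ _ hxy => congrArg Prod.fst hxy
  rw [hgraph, LinearMap.range_comp]
  exact (Submodule.equivMapOfInjective _ hinj _).finrank_eq.symm

theorem LinearMap.range_mulRight_eq_span_singleton {K A : Type*} [CommSemiring K]
    [CommSemiring A] [Algebra K A] (b : A) :
    LinearMap.range (LinearMap.mulRight K b) = (Ideal.span {b}).restrictScalars K := by
  ext x
  simp [Ideal.mem_span_singleton']

theorem finrank_span_mk_eq_natDegree_sub_natDegree {K : Type*} [Field K] {f g : K[X]}
    (hf : f ≠ 0) (hgf : g ∣ f) :
    Module.finrank K ((Ideal.span {Ideal.Quotient.mk (Ideal.span {f}) g}).restrictScalars K) =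
      f.natDegree - g.natDegree := by
  set I := Ideal.span {Ideal.Quotient.mk (Ideal.span {f}) g}
  have : Module.Finite K (K[X] ⧸ Ideal.span {f}) := (AdjoinRoot.powerBasis hf).finite
  have hle : Ideal.span {f} ≤ Ideal.span {g} := Ideal.span_singleton_le_span_singleton.mpr hgf
  have hI : I = (Ideal.span {g}).map (Ideal.Quotient.mkₐ K (Ideal.span {f})) := by
    rw [Ideal.map_span, Set.image_singleton]
    rfl
  -- `(K[X]/(f))/(g) ≅ K[X]/(g)`
  have hquot : Module.finrank K ((K[X] ⧸ Ideal.span {f}) ⧸ I.restrictScalars K) = g.natDegree := by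
    rw [(Submodule.Quotient.restrictScalarsEquiv K I).finrank_eq, hI,
      (DoubleQuot.quotQuotEquivQuotOfLEₐ K hle).toLinearEquiv.finrank_eq,
      finrank_quotient_span_eq_natDegree]
  have hsum := Submodule.finrank_quotient_add_finrank (I.restrictScalars K)
  rw [hquot, finrank_quotient_span_eq_natDegree] at hsum
  omega

noncomputable def rpnPowerBasis (p n : ℕ) [Fact (1 < p)] (hn : 0 < n) :
    PowerBasis (ZMod p) (Rpn p n) :=
  AdjoinRoot.powerBasis' (monic_X_pow_add_one hn)

noncomputable def rpnBasis (p n : ℕ) [Fact (1 < p)] (hn : 0 < n) :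
    Module.Basis (Fin n) (ZMod p) (Rpn p n) :=
  (rpnPowerBasis p n hn).basis.reindex (finCongr (natDegree_X_pow_add_one n))

theorem rpnBasis_apply (p n : ℕ) [Fact (1 < p)] (hn : 0 < n) (i : Fin n) :
    rpnBasis p n hn i = mkR p n (X ^ (i : ℕ)) := by
  rw [rpnBasis, Module.Basis.reindex_apply, PowerBasis.basis_eq_pow, map_pow]
  rfl

noncomputable def toRLinearEquiv (p n : ℕ) [Fact (1 < p)] (hn : 0 < n) :
    (Fin n → ZMod p) ≃ₗ[ZMod p] Rpn p n :=
  (rpnBasis p n hn).equivFun.symm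

theorem toRLinearEquiv_apply (p n : ℕ) [Fact (1 < p)] (hn : 0 < n) (v : Fin n → ZMod p) :
    toRLinearEquiv p n hn v = toR p n v := by
  rw [toRLinearEquiv, Module.Basis.equivFun_symm_apply, toR, toPoly, map_sum]
  refine Finset.sum_congr rfl fun i _ => ?_
  rw [rpnBasis_apply, map_mul]
  exact Algebra.smul_def (v i) (mkR p n (X ^ (i : ℕ)))

theorem stmt17_general (p n : ℕ) [Fact p.Prime] (hn : 0 < n)
    (g : Polynomial (ZMod p)) (hgdvd : g ∣ X ^ n + 1)
    (a : Rpn p n) :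
    ∃ W : Submodule (ZMod p) ((Fin n → ZMod p) × (Fin n → ZMod p)),
      (W : Set ((Fin n → ZMod p) × (Fin n → ZMod p)))
          = {ab | ∃ u : Rpn p n, toR p n ab.1 = u * mkR p n g ∧
              toR p n ab.2 = u * a * mkR p n g} ∧
      Module.finrank (ZMod p) W = n - g.natDegree := by
  let ψ := LinearMap.mulRight (ZMod p) (mkR p n g)
  let e := (toRLinearEquiv p n hn).prodCongr (toRLinearEquiv p n hn)
  refine ⟨(LinearMap.range (ψ.prod (LinearMap.mulLeft (ZMod p) a ∘ₗ ψ))).comap e.toLinearMap,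
    ?_, ?_⟩
  · ext ⟨v, w⟩
    simp only [SetLike.mem_coe, Submodule.mem_comap, LinearMap.mem_range, Set.mem_ofPred_eq,
      LinearEquiv.coe_coe, LinearEquiv.prodCongr_apply, toRLinearEquiv_apply, e, ψ,
      LinearMap.prod_apply, Function.prod_apply, LinearMap.coe_comp, Function.comp_apply,
      LinearMap.mulRight_apply, LinearMap.mulLeft_apply, Prod.mk.injEq]
    refine exists_congr fun u => and_congr eq_comm ?_
    rw [eq_comm, mul_left_comm, mul_assoc]
  · rw [Submodule.comap_equiv_eq_map_symm, LinearEquiv.finrank_map_eq,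
      LinearMap.finrank_range_prod_comp, LinearMap.range_mulRight_eq_span_singleton,
      mkR, finrank_span_mk_eq_natDegree_sub_natDegree (monic_X_pow_add_one hn).ne_zero hgdvd,
      natDegree_X_pow_add_one]

/-- the subspace `S = {(u·ḡ, u·a·ḡ) : u ∈ R}` of `F_p^n × F_p^n` has
dimension `n − deg g` over `F_p` (hence the stabilizer dimension of the associated code
is `deg g`). -/
theorem stmt17 (p n : ℕ) [Fact p.Prime] (hp : Odd p) (hn : 0 < n)
    (g : Polynomial (ZMod p)) (hgm : g.Monic) (hgdvd : g ∣ X ^ n + 1)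
    (a : Rpn p n) :
    ∃ W : Submodule (ZMod p) ((Fin n → ZMod p) × (Fin n → ZMod p)),
      (W : Set ((Fin n → ZMod p) × (Fin n → ZMod p)))
          = {ab | ∃ u : Rpn p n, toR p n ab.1 = u * mkR p n g ∧
              toR p n ab.2 = u * a * mkR p n g} ∧
      Module.finrank (ZMod p) W = n - g.natDegree :=
  stmt17_general p n hn g hgdvd a
end
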